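/- arXiv:2105.07070 — 2 statements merged into one kernel-verified Lean document; each statement's English description precedes it below -/
import Mathlib

section
/- Let pC^1_j, j=1..m, be linear constraint operators acting only on the first variable of bivariate functions, and pC^2_i, i=1..n, acting only on the second variable, each with switching functions pφ^1_j, pφ^2_i satisfying pC^1_j[pφ^1_k] = δ_{jk}, pC^2_i[pφ^2_k] = δ_{ik}, and with constraint values pκ^1_j(y), pκ^2_i(x) that are consistent (pC^1_j[pκ^2_i] = pC^2_i[pκ^1_j]). Assume the constraint operators of different variables commute on the free function g and each operator acting on a product f·h where f does not depend on its variable satisfies pC[f·h] = f·pC[h]. Then the recursive composition u = pU^1(pU^2(g)), where pU^k(g)(x,y) = g(x,y) + Σ_j pφ^k_j · (pκ^k_j − pC^k_j[g]), satisfies all constraints of both variables: pC^1_j[u] = pκ^1_j and pC^2_i[u] = pκ^2_i. -/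
/-!
The univariate constrained expression `F + ∑ₖ φₖ (κₖ - Cₖ F)` meets the constraints `Cⱼ` for
any free function `F`, because each `Cⱼ` lets the factors `κₖ - Cₖ F` (constant in its
variable) through and picks out the `j`-th summand by the Kronecker delta property. Applying
this in the second variable to `g` gives `C²ᵢ U₂ = κ²ᵢ`, and in the first variable to `U₂` gives
`C¹ⱼ u = κ¹ⱼ`. For `C²ᵢ u = κ²ᵢ`, the first-variable correction terms must vanish under `C²ᵢ`,
i.e. `C²ᵢ (C¹ⱼ U₂) = C²ᵢ κ¹ⱼ`. By commutativity and consistency, `C¹ⱼ U₂` is itself a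
second-variable constrained expression, with free function `C¹ⱼ g` and constraint values
`C²ₖ κ¹ⱼ`, so this is once more the univariate statement.
-/

open Finset

lemma LinearMap.apply_fun_sub {α β : Type*} (C : (α → β → ℝ) →ₗ[ℝ] (α → β → ℝ))
    (p q : α → β → ℝ) (x : α) (y : β) :
    C (fun x' y' => p x' y' - q x' y') x y = C p x y - C q x y :=
  congrFun (congrFun (map_sub C p q) x) y

lemma LinearMap.apply_fun_add_sum {α β ι : Type*} [Fintype ι]
    (C : (α → β → ℝ) →ₗ[ℝ] (α → β → ℝ)) (F : α → β → ℝ) (h : ι → α → β → ℝ) (x : α) (y : β) :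
    C (fun x' y' => F x' y' + ∑ k, h k x' y') x y = C F x y + ∑ k, C (h k) x y := by
  have hfun : (fun x' y' => F x' y' + ∑ k, h k x' y') = F + ∑ k, h k := by
    funext x' y'
    simp only [Pi.add_apply, Finset.sum_apply]
  rw [hfun, map_add, map_sum]
  simp only [Pi.add_apply, Finset.sum_apply]

section FirstVariable

variable {ι : Type*} [Fintype ι]

lemma apply_add_sum_mul_of_map_mul_snd (C : (ℝ → ℝ → ℝ) →ₗ[ℝ] (ℝ → ℝ → ℝ))
    (hmul : ∀ (f : ℝ → ℝ) (h : ℝ → ℝ → ℝ) x y,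
      C (fun x' y' => f y' * h x' y') x y = f y * C h x y)
    (F : ℝ → ℝ → ℝ) (a : ι → ℝ → ℝ) (h : ι → ℝ → ℝ → ℝ) (x y : ℝ) :
    C (fun x' y' => F x' y' + ∑ k, a k y' * h k x' y') x y
      = C F x y + ∑ k, a k y * C (h k) x y := by
  rw [C.apply_fun_add_sum F (fun k x' y' => a k y' * h k x' y')]
  simp only [hmul]

lemma apply_add_sum_switching_fst [DecidableEq ι] (C : ι → (ℝ → ℝ → ℝ) →ₗ[ℝ] (ℝ → ℝ → ℝ))
    (φ : ι → ℝ → ℝ)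
    (hφ : ∀ j k x y, C j (fun x' _ => φ k x') x y = if j = k then 1 else 0)
    (hmul : ∀ j (f : ℝ → ℝ) (h : ℝ → ℝ → ℝ) x y,
      C j (fun x' y' => f y' * h x' y') x y = f y * C j h x y)
    (F : ℝ → ℝ → ℝ) (r : ι → ℝ → ℝ → ℝ) (hr : ∀ k x x' y, r k x y = r k x' y) (j : ι) (x y : ℝ) :
    C j (fun x' y' => F x' y' + ∑ k, φ k x' * r k x' y') x y = C j F x y + r j x y := by
  have hfun : (fun x' y' => F x' y' + ∑ k, φ k x' * r k x' y')
      = fun x' y' => F x' y' + ∑ k, r k x y' * φ k x' := by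
    funext x' y'
    simp only [hr _ x' x, mul_comm]
  rw [hfun, apply_add_sum_mul_of_map_mul_snd (C j) (hmul j)]
  simp only [hφ, mul_ite, mul_one, mul_zero, sum_ite_eq, mem_univ, if_true]

end FirstVariable

section SecondVariable

variable {ι : Type*} [Fintype ι]

lemma apply_add_sum_mul_of_map_mul_fst (C : (ℝ → ℝ → ℝ) →ₗ[ℝ] (ℝ → ℝ → ℝ))
    (hmul : ∀ (f : ℝ → ℝ) (h : ℝ → ℝ → ℝ) x y,
      C (fun x' y' => f x' * h x' y') x y = f x * C h x y)
    (F : ℝ → ℝ → ℝ) (a : ι → ℝ → ℝ) (h : ι → ℝ → ℝ → ℝ) (x y : ℝ) :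
    C (fun x' y' => F x' y' + ∑ k, a k x' * h k x' y') x y
      = C F x y + ∑ k, a k x * C (h k) x y := by
  rw [C.apply_fun_add_sum F (fun k x' y' => a k x' * h k x' y')]
  simp only [hmul]

lemma apply_add_sum_switching_snd [DecidableEq ι] (C : ι → (ℝ → ℝ → ℝ) →ₗ[ℝ] (ℝ → ℝ → ℝ))
    (φ : ι → ℝ → ℝ)
    (hφ : ∀ i k x y, C i (fun _ y' => φ k y') x y = if i = k then 1 else 0)
    (hmul : ∀ i (f : ℝ → ℝ) (h : ℝ → ℝ → ℝ) x y,
      C i (fun x' y' => f x' * h x' y') x y = f x * C i h x y)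
    (F : ℝ → ℝ → ℝ) (r : ι → ℝ → ℝ → ℝ) (hr : ∀ k x y y', r k x y = r k x y') (i : ι) (x y : ℝ) :
    C i (fun x' y' => F x' y' + ∑ k, φ k y' * r k x' y') x y = C i F x y + r i x y := by
  have hfun : (fun x' y' => F x' y' + ∑ k, φ k y' * r k x' y')
      = fun x' y' => F x' y' + ∑ k, r k x' y * φ k y' := by
    funext x' y'
    simp only [hr _ x' y' y, mul_comm]
  rw [hfun, apply_add_sum_mul_of_map_mul_fst (C i) (hmul i)]
  simp only [hφ, mul_ite, mul_one, mul_zero, sum_ite_eq, mem_univ, if_true]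

end SecondVariable
/-- Recursive construction of bivariate constrained expressions: using the univariate
constrained expression of one variable as the free function in the univariate
constrained expression of the other variable satisfies both sets of constraints. -/
theorem recursive_bivariate_constrained_expression (m n : ℕ)
    -- constraint operators acting only on the first variable (output independent of it)
    (C1 : Fin m → ((ℝ → ℝ → ℝ) →ₗ[ℝ] (ℝ → ℝ → ℝ)))
    -- constraint operators acting only on the second variable (output independent of it)
    (C2 : Fin n → ((ℝ → ℝ → ℝ) →ₗ[ℝ] (ℝ → ℝ → ℝ)))
    (φ1 : Fin m → ℝ → ℝ) (φ2 : Fin n → ℝ → ℝ)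
    (κ1 : Fin m → ℝ → ℝ) (κ2 : Fin n → ℝ → ℝ)
    (g : ℝ → ℝ → ℝ)
    -- the operators consume their own variable
    (hind1 : ∀ j h x x' y, C1 j h x y = C1 j h x' y)
    (hind2 : ∀ i h x y y', C2 i h x y = C2 i h x y')
    -- Kronecker delta property of the switching functions
    (hφ1 : ∀ j k x y, C1 j (fun x' _ => φ1 k x') x y = if j = k then 1 else 0)
    (hφ2 : ∀ i k x y, C2 i (fun _ y' => φ2 k y') x y = if i = k then 1 else 0)
    -- factors not depending on the operated variable pass through the operator
    (hmul1 : ∀ j (f : ℝ → ℝ) (h : ℝ → ℝ → ℝ) x y,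
      C1 j (fun x' y' => f y' * h x' y') x y = f y * C1 j h x y)
    (hmul2 : ∀ i (f : ℝ → ℝ) (h : ℝ → ℝ → ℝ) x y,
      C2 i (fun x' y' => f x' * h x' y') x y = f x * C2 i h x y)
    -- consistency of the constraints
    (hcons : ∀ j i x y, C1 j (fun x' _ => κ2 i x') x y = C2 i (fun _ y' => κ1 j y') x y)
    -- the constraint operators of different variables commute on the free function
    (hcomm : ∀ j i, C1 j (C2 i g) = C2 i (C1 j g))
    (U2 : ℝ → ℝ → ℝ) (hU2 : U2 = fun x y => g x y + ∑ i, φ2 i y * (κ2 i x - C2 i g x y))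
    (u : ℝ → ℝ → ℝ) (hu : u = fun x y => U2 x y + ∑ j, φ1 j x * (κ1 j y - C1 j U2 x y)) :
    (∀ j x y, C1 j u x y = κ1 j y) ∧ (∀ i x y, C2 i u x y = κ2 i x) := by
  have hC2U2 : ∀ i x y, C2 i U2 x y = κ2 i x := by
    intro i x y
    rw [hU2, apply_add_sum_switching_snd C2 φ2 hφ2 hmul2 g _
      (fun k x y y' => by rw [hind2 k g x y y'])]
    ring
  have hC1U2 : ∀ j, C1 j U2 = fun x y =>
      C1 j g x y + ∑ k, φ2 k y * (C2 k (fun _ y' => κ1 j y') x y - C2 k (C1 j g) x y) := by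
    intro j
    funext x y
    rw [hU2, apply_add_sum_mul_of_map_mul_snd (C1 j) (hmul1 j)]
    simp only [LinearMap.apply_fun_sub, hcons, hcomm]
  have hC2C1U2 : ∀ i j x y, C2 i (C1 j U2) x y = C2 i (fun _ y' => κ1 j y') x y := by
    intro i j x y
    rw [hC1U2, apply_add_sum_switching_snd C2 φ2 hφ2 hmul2 _ _
      (fun k x y y' => by rw [hind2 k _ x y y', hind2 k (C1 j g) x y y'])]
    ring
  refine ⟨fun j x y => ?_, fun i x y => ?_⟩
  · rw [hu, apply_add_sum_switching_fst C1 φ1 hφ1 hmul1 U2 _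
      (fun k x x' y => by rw [hind1 k U2 x x' y])]
    ring
  · rw [hu, apply_add_sum_mul_of_map_mul_fst (C2 i) (hmul2 i)]
    simp only [LinearMap.apply_fun_sub, hC2C1U2, hC2U2, sub_self, mul_zero, sum_const_zero,
      add_zero]
end

section
/- The Legendre polynomials L_k defined by L_0 = 1, L_1(z) = z, and (k+1)L_{k+1}(z) = (2k+1)z·L_k(z) − k·L_{k−1}(z) satisfy the orthogonality relation ∫_{−1}^{1} L_i(z) L_j(z) dz = (2/(2i+1))·δ_{ij}. -/
/-- Legendre polynomials via the Bonnet recursion: `L 0 = 1`, `L 1 = z`,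
`(k+1) L (k+1) = (2k+1) z L k - k L (k-1)`. -/
noncomputable def legendreL : ℕ → ℝ → ℝ
  | 0, _ => 1
  | 1, z => z
  | (k + 2), z =>
      ((2 * (k + 1 : ℝ) + 1) * z * legendreL (k + 1) z - (k + 1 : ℝ) * legendreL k z) /
        ((k + 1 : ℝ) + 1)

/-! The Legendre polynomials are eigenvectors of `p ↦ ((X² - 1) p')'`, `Pₙ` with eigenvalue
`n (n + 1)`. This operator is symmetric for `(p, q) ↦ ∫_{-1}^{1} p q` because `X² - 1`
vanishes at `±1`, so eigenvectors with distinct eigenvalues are orthogonal. For the norms,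
`∫ X Pₙ Pₙ₊₁` is expanded by the three-term recurrence once through `X Pₙ` and once through
`X Pₙ₊₁`; by orthogonality this gives `(2n + 3) ∫ Pₙ₊₁² = (2n + 1) ∫ Pₙ²`. -/

open Polynomial

namespace Polynomial

noncomputable def intervalIntegralₗ (a b : ℝ) : ℝ[X] →ₗ[ℝ] ℝ where
  toFun p := ∫ x in a..b, p.eval x
  map_add' p q := by
    simpa only [eval_add] using intervalIntegral.integral_add (p.continuous.intervalIntegrable a b)
      (q.continuous.intervalIntegrable a b)
  map_smul' r p := by
    simp only [eval_smul, smul_eq_mul, intervalIntegral.integral_const_mul, RingHom.id_apply]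

@[simp] lemma intervalIntegralₗ_apply (a b : ℝ) (p : ℝ[X]) :
    intervalIntegralₗ a b p = ∫ x in a..b, p.eval x := rfl

lemma intervalIntegralₗ_natCast_mul (a b : ℝ) (k : ℕ) (p : ℝ[X]) :
    intervalIntegralₗ a b (k * p) = k * intervalIntegralₗ a b p := by
  rw [← nsmul_eq_mul, map_nsmul, nsmul_eq_mul]

lemma intervalIntegralₗ_derivative (a b : ℝ) (p : ℝ[X]) :
    intervalIntegralₗ a b (derivative p) = p.eval b - p.eval a :=
  intervalIntegral.integral_eq_sub_of_hasDerivAt (fun x _ => p.hasDerivAt x)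
    (p.derivative.continuous.intervalIntegrable a b)

noncomputable def legendre : ℕ → ℝ[X]
  | 0 => 1
  | 1 => X
  | n + 2 =>
    C ((n : ℝ) + 2)⁻¹ *
      ((2 * n + 3 : ℝ[X]) * X * legendre (n + 1) - (n + 1 : ℝ[X]) * legendre n)

@[simp] lemma legendre_zero : legendre 0 = 1 := rfl

@[simp] lemma legendre_one : legendre 1 = X := rfl

lemma legendre_add_two (n : ℕ) :
    (n + 2 : ℝ[X]) * legendre (n + 2) =
      (2 * n + 3 : ℝ[X]) * X * legendre (n + 1) - (n + 1 : ℝ[X]) * legendre n := by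
  have hn : ((n : ℝ) + 2) ≠ 0 := by positivity
  rw [legendre, ← mul_assoc, show (n + 2 : ℝ[X]) = C ((n : ℝ) + 2) by simp [map_ofNat],
    ← C_mul, mul_inv_cancel₀ hn, C_1, one_mul]

-- At `n = 0` the truncated index `n - 1` is harmless: its coefficient is `0`.
lemma X_mul_legendre (n : ℕ) :
    (2 * n + 1 : ℝ[X]) * (X * legendre n) =
      (n + 1 : ℝ[X]) * legendre (n + 1) + (n : ℝ[X]) * legendre (n - 1) := by
  rcases n with _ | n
  · simp
  · simp only [Nat.cast_add, Nat.cast_one, add_tsub_cancel_right, add_assoc, one_add_one_eq_two]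
    linear_combination -legendre_add_two n

-- Neither relation closes an induction on its own; each step of one uses the other.
lemma X_mul_derivative_legendre_and_X_sq_sub_one_mul_derivative_legendre (n : ℕ) :
    X * derivative (legendre (n + 1)) - derivative (legendre n) =
        (n + 1 : ℝ[X]) * legendre (n + 1) ∧
      (X ^ 2 - 1) * derivative (legendre (n + 1)) =
        (n + 1 : ℝ[X]) * (X * legendre (n + 1) - legendre n) := by
  induction n with
  | zero => constructor <;> simp [sq]
  | succ n ih =>
    obtain ⟨hX, hSq⟩ := ih
    have hBonnetDeriv := congrArg derivative (legendre_add_two n)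
    simp only [derivative_mul, derivative_add, derivative_sub, derivative_natCast,
      derivative_ofNat, derivative_X, derivative_one, zero_mul, zero_add, add_zero,
      mul_one] at hBonnetDeriv
    have hn : (n + 2 : ℝ[X]) ≠ 0 := by exact_mod_cast (n + 1).succ_ne_zero
    have hNext : derivative (legendre (n + 2)) - X * derivative (legendre (n + 1)) =
        (n + 2 : ℝ[X]) * legendre (n + 1) := by
      refine mul_left_cancel₀ hn ?_
      linear_combination hBonnetDeriv + (n + 1) * hX
    simp only [Nat.cast_add, Nat.cast_one, add_assoc, one_add_one_eq_two]
    constructor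
    · linear_combination X * hNext + hSq - legendre_add_two n
    · linear_combination (X ^ 2 - 1) * hNext + X * hSq - X * legendre_add_two n

noncomputable def legendreOperator (p : ℝ[X]) : ℝ[X] :=
  derivative ((X ^ 2 - 1) * derivative p)

lemma legendreOperator_legendre (n : ℕ) :
    legendreOperator (legendre n) = ((n * (n + 1) : ℕ) : ℝ[X]) * legendre n := by
  rcases n with _ | n
  · simp [legendreOperator]
  · obtain ⟨hX, hSq⟩ := X_mul_derivative_legendre_and_X_sq_sub_one_mul_derivative_legendre n
    rw [legendreOperator, hSq]
    simp only [derivative_mul, derivative_sub, derivative_add, derivative_natCast, derivative_one,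
      derivative_X, zero_mul, zero_add, one_mul]
    push_cast
    linear_combination (n + 1 : ℝ[X]) * hX

lemma legendreOperator_mul_sub_mul_legendreOperator (p q : ℝ[X]) :
    legendreOperator p * q - p * legendreOperator q =
      derivative ((X ^ 2 - 1) * (derivative p * q - p * derivative q)) := by
  simp only [legendreOperator, derivative_mul, derivative_sub]
  ring

lemma intervalIntegralₗ_legendreOperator_mul (p q : ℝ[X]) :
    intervalIntegralₗ (-1) 1 (legendreOperator p * q) =
      intervalIntegralₗ (-1) 1 (p * legendreOperator q) := by
  rw [← sub_eq_zero, ← map_sub, legendreOperator_mul_sub_mul_legendreOperator,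
    intervalIntegralₗ_derivative]
  simp

lemma intervalIntegralₗ_legendre_mul_legendre_of_ne {m n : ℕ} (hmn : m ≠ n) :
    intervalIntegralₗ (-1) 1 (legendre m * legendre n) = 0 := by
  have h := intervalIntegralₗ_legendreOperator_mul (legendre m) (legendre n)
  rw [legendreOperator_legendre, legendreOperator_legendre, mul_assoc, mul_left_comm (legendre m),
    intervalIntegralₗ_natCast_mul, intervalIntegralₗ_natCast_mul] at h
  have heigen : m * (m + 1) ≠ n * (n + 1) :=
    (StrictMono.injective (f := fun k : ℕ => k * (k + 1))
      fun a b hab => Nat.mul_lt_mul'' hab (by omega)).ne hmn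
  exact (mul_eq_mul_right_iff.mp h).resolve_left (by exact_mod_cast heigen)

lemma intervalIntegralₗ_legendre_mul_self_succ (n : ℕ) :
    (2 * n + 3 : ℝ) * intervalIntegralₗ (-1) 1 (legendre (n + 1) * legendre (n + 1)) =
      (2 * n + 1) * intervalIntegralₗ (-1) 1 (legendre n * legendre n) := by
  have hXP :
      ((2 * n + 1 : ℕ) : ℝ) * intervalIntegralₗ (-1) 1 (X * legendre n * legendre (n + 1)) =
      ((n + 1 : ℕ) : ℝ) * intervalIntegralₗ (-1) 1 (legendre (n + 1) * legendre (n + 1)) +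
        (n : ℝ) * intervalIntegralₗ (-1) 1 (legendre (n - 1) * legendre (n + 1)) := by
    rw [← intervalIntegralₗ_natCast_mul, ← intervalIntegralₗ_natCast_mul,
      ← intervalIntegralₗ_natCast_mul, ← map_add]
    congr 1
    push_cast
    linear_combination legendre (n + 1) * X_mul_legendre n
  have hXPsucc :
      ((2 * n + 3 : ℕ) : ℝ) * intervalIntegralₗ (-1) 1 (X * legendre n * legendre (n + 1)) =
      ((n + 2 : ℕ) : ℝ) * intervalIntegralₗ (-1) 1 (legendre n * legendre (n + 2)) +
        ((n + 1 : ℕ) : ℝ) * intervalIntegralₗ (-1) 1 (legendre n * legendre n) := by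
    rw [← intervalIntegralₗ_natCast_mul, ← intervalIntegralₗ_natCast_mul,
      ← intervalIntegralₗ_natCast_mul, ← map_add]
    congr 1
    have := X_mul_legendre (n + 1)
    simp only [Nat.cast_add, Nat.cast_one, add_tsub_cancel_right, add_assoc,
      one_add_one_eq_two] at this
    push_cast
    linear_combination legendre n * this
  rw [intervalIntegralₗ_legendre_mul_legendre_of_ne (m := n - 1) (by omega), mul_zero,
    add_zero] at hXP
  rw [intervalIntegralₗ_legendre_mul_legendre_of_ne (m := n) (n := n + 2) (by omega), mul_zero,
    zero_add] at hXPsucc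
  push_cast at hXP hXPsucc
  refine mul_left_cancel₀ (show (n + 1 : ℝ) ≠ 0 by positivity) ?_
  linear_combination (2 * n + 1 : ℝ) * hXPsucc - (2 * n + 3 : ℝ) * hXP

lemma intervalIntegralₗ_legendre_mul_self (n : ℕ) :
    intervalIntegralₗ (-1) 1 (legendre n * legendre n) = 2 / (2 * n + 1) := by
  induction n with
  | zero => norm_num
  | succ n ih =>
    have h := intervalIntegralₗ_legendre_mul_self_succ n
    rw [ih, mul_div_cancel₀ _ (by positivity)] at h
    rw [eq_div_iff (by positivity)]
    push_cast
    linear_combination h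

end Polynomial

theorem legendreL_eq_eval_legendre : ∀ (n : ℕ) (z : ℝ), legendreL n z = (legendre n).eval z
  | 0, z => by simp [legendreL]
  | 1, z => by simp [legendreL]
  | n + 2, z => by
    rw [legendreL, legendreL_eq_eval_legendre (n + 1), legendreL_eq_eval_legendre n,
      div_eq_iff (by positivity)]
    have := congrArg (eval z) (legendre_add_two n)
    simp only [eval_mul, eval_add, eval_sub, eval_natCast, eval_ofNat, eval_one, eval_X] at this
    linear_combination -this

/-- Orthogonality of the Legendre polynomials:
`∫_{-1}^{1} L i L j = (2/(2i+1)) δᵢⱼ`. -/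
theorem legendre_orthogonality (i j : ℕ) :
    (∫ z in (-1 : ℝ)..1, legendreL i z * legendreL j z) =
      if i = j then 2 / (2 * (i : ℝ) + 1) else 0 := by
  have h : (∫ z in (-1 : ℝ)..1, legendreL i z * legendreL j z) =
      intervalIntegralₗ (-1) 1 (legendre i * legendre j) := by
    simp [legendreL_eq_eval_legendre]
  split_ifs with hij
  · subst hij
    rw [h, intervalIntegralₗ_legendre_mul_self]
  · rw [h, intervalIntegralₗ_legendre_mul_legendre_of_ne hij]
end
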